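/- arXiv:1608.08288 — 7 statements merged into one kernel-verified Lean document; each statement's English description precedes it below -/
import Mathlib

section
/- For any nonzero vector v in R^n, var(v) + varbar(alt(v)) = n - 1, where var(v) is the number of sign changes in the sequence of nonzero entries of v, varbar(v) is the maximum of var(w) over all w agreeing with v on the nonzero entries of v, and alt(v) = (v_1, -v_2, v_3, -v_4, ...). -/
open scoped BigOperators

/-- Number of sign changes between consecutive entries of a list of reals. -/
noncomputable def listVar : List ℝ → ℕ
  | a :: b :: t => (if a * b < 0 then 1 else 0) + listVar (b :: t)
  | _ => 0

/-- `var v` : the number of sign changes of `v`, ignoring zero entries. -/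
noncomputable def var {n : ℕ} (v : Fin n → ℝ) : ℕ :=
  listVar ((List.ofFn v).filter (fun x => x ≠ 0))

/-- `varbar v` : the maximum of `var w` over all `w` agreeing with `v` on the
nonzero entries of `v`. -/
noncomputable def varbar {n : ℕ} (v : Fin n → ℝ) : ℕ :=
  sSup {m | ∃ w : Fin n → ℝ, (∀ i, v i ≠ 0 → w i = v i) ∧ var w = m}

/-- `altv v = (v 0, -v 1, v 2, ...)`. -/
def altv {n : ℕ} (v : Fin n → ℝ) : Fin n → ℝ := fun i => (-1 : ℝ) ^ (i : ℕ) * v i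

/-- A vector with entries in `{0, 1, -1}`, representing a sign vector. -/
def IsSignVec {n : ℕ} (σ : Fin n → ℝ) : Prop := ∀ i, σ i = 0 ∨ σ i = 1 ∨ σ i = -1

noncomputable def varL (l : List ℝ) : ℕ := listVar (l.filter (fun x => x ≠ 0))

def SRel : ℝ → List ℝ → List ℝ → Prop
  | _, [], [] => True
  | s, a::v, b::w => (a ≠ 0 → b = s * a) ∧ SRel (-s) v w
  | _, _, _ => False

@[simp] lemma listVar_nil : listVar [] = 0 := rfl
@[simp] lemma listVar_single (a : ℝ) : listVar [a] = 0 := rfl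
lemma listVar_cons_cons (a b : ℝ) (t : List ℝ) :
    listVar (a :: b :: t) = (if a * b < 0 then 1 else 0) + listVar (b :: t) := rfl

@[simp] lemma varL_nil : varL [] = 0 := rfl
@[simp] lemma varL_single (x : ℝ) : varL [x] = 0 := by
  by_cases hx : x = 0 <;> simp [varL, List.filter_cons, hx]

lemma filter_cons_ne {a : ℝ} (l : List ℝ) (ha : a ≠ 0) :
    (a::l).filter (fun x => x ≠ 0) = a :: l.filter (fun x => x ≠ 0) := by
  simp [List.filter_cons, ha]

lemma varL_cons_zero (l : List ℝ) : varL ((0:ℝ) :: l) = varL l := by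
  simp [varL, List.filter_cons]

lemma varL_cons_cons_zero (a : ℝ) (l : List ℝ) : varL (a :: (0:ℝ) :: l) = varL (a :: l) := by
  simp [varL, List.filter_cons]

lemma listVar_cons_le (a : ℝ) (l : List ℝ) : listVar (a :: l) ≤ 1 + listVar l := by
  cases l with
  | nil => simp
  | cons b t => rw [listVar_cons_cons]; split_ifs <;> omega

lemma varL_cons_le (a : ℝ) (l : List ℝ) : varL (a :: l) ≤ 1 + varL l := by
  by_cases ha : a = 0
  · rw [ha, varL_cons_zero]; omega
  · simp only [varL, filter_cons_ne _ ha]; exact listVar_cons_le _ _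

lemma listVar_le (l : List ℝ) : listVar l ≤ l.length - 1 := by
  induction l with
  | nil => simp
  | cons a t ih =>
    cases t with
    | nil => simp
    | cons b t' =>
      rw [listVar_cons_cons]
      simp only [List.length_cons] at *
      split_ifs <;> omega

lemma varL_le (l : List ℝ) : varL l ≤ l.length - 1 := by
  have h1 := listVar_le (l.filter (fun x => x ≠ 0))
  have h2 := List.length_filter_le (fun x : ℝ => decide (x ≠ 0)) l
  unfold varL
  omega

lemma listVar_sign_replace {x y : ℝ} (h : x * y > 0) (l : List ℝ) :
    listVar (x :: l) = listVar (y :: l) := by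
  cases l with
  | nil => simp
  | cons c t =>
    rw [listVar_cons_cons, listVar_cons_cons]
    congr 1
    have : x * c < 0 ↔ y * c < 0 := by
      constructor <;> intro h' <;>
        rcases lt_trichotomy x 0 with hx|hx|hx <;>
        rcases lt_trichotomy y 0 with hy|hy|hy <;> nlinarith
    simp [this]

lemma varL_sign_replace {x y : ℝ} (h : x * y > 0) (l : List ℝ) :
    varL (x :: l) = varL (y :: l) := by
  have hx : x ≠ 0 := by intro h0; rw [h0] at h; simp at h
  have hy : y ≠ 0 := by intro h0; rw [h0] at h; simp at h
  simp only [varL, filter_cons_ne _ hx, filter_cons_ne _ hy]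
  exact listVar_sign_replace h _

lemma varL_cons_cons_ne {a c : ℝ} (ha : a ≠ 0) (hc : c ≠ 0) (l : List ℝ) :
    varL (a :: c :: l) = (if a * c < 0 then 1 else 0) + varL (c :: l) := by
  simp only [varL, filter_cons_ne _ ha, filter_cons_ne _ hc, listVar_cons_cons]

lemma srel_len {s : ℝ} : ∀ {v w : List ℝ}, SRel s v w → v.length = w.length := by
  intro v
  induction v generalizing s with
  | nil => intro w h; cases w with
    | nil => rfl
    | cons b t => exact absurd h (by simp [SRel])
  | cons a v ih =>
    intro w h
    cases w with
    | nil => exact absurd h (by simp [SRel])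
    | cons b t => simp only [List.length_cons]; exact congrArg (·+1) (ih h.2)

lemma mySignNeg {s : ℝ} (hs : s = 1 ∨ s = -1) : -s = 1 ∨ -s = -1 := by
  rcases hs with rfl|rfl
  · right; rfl
  · left; norm_num

lemma mySignNeZero {s : ℝ} (hs : s = 1 ∨ s = -1) : s ≠ 0 := by
  rcases hs with rfl|rfl <;> norm_num

lemma lemM : ∀ (v w : List ℝ) (s ε a : ℝ), (s = 1 ∨ s = -1) → (ε = 1 ∨ ε = -1) →
    a ≠ 0 → SRel s v w →
    varL (a::v) + varL (ε*a::w) ≤ v.length + (if ε = s then 1 else 0) := by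
  intro v
  induction v with
  | nil =>
    intro w s ε a hs hε ha hrel
    cases w with
    | nil => simp
    | cons b t => exact absurd hrel (by simp [SRel])
  | cons c v' ih =>
    intro w s ε a hs hε ha hrel
    cases w with
    | nil => exact absurd hrel (by simp [SRel])
    | cons d w' =>
      obtain ⟨hd, ht⟩ := hrel
      have hεz : ε ≠ 0 := mySignNeZero hε
      have hsz : s ≠ 0 := mySignNeZero hs
      have hεa : ε * a ≠ 0 := mul_ne_zero hεz ha
      by_cases hc : c = 0
      · subst hc
        rw [varL_cons_cons_zero]
        by_cases hd0 : d = 0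
        · subst hd0
          rw [varL_cons_cons_zero]
          have h1 := ih w' (-s) ε a (mySignNeg hs) hε ha ht
          rcases hs with rfl|rfl <;> rcases hε with rfl|rfl <;>
            simp only [List.length_cons] <;> norm_num at h1 ⊢ <;> omega
        · rcases lt_trichotomy (a*d) 0 with had|had|had
          · have h2 : varL (d :: w') = varL ((-1)*a :: w') :=
              varL_sign_replace (by nlinarith) w'
            rw [varL_cons_cons_ne hεa hd0, h2]
            have h1 := ih w' (-s) (-1) a (mySignNeg hs) (Or.inr rfl) ha ht
            have hind : (if ε*a*d < 0 then 1 else 0) = (if ε = 1 then 1 else 0) := by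
              rcases hε with rfl|rfl <;> norm_num <;> nlinarith
            rw [hind]
            rcases hs with rfl|rfl <;> rcases hε with rfl|rfl <;>
              simp only [List.length_cons] <;> norm_num at h1 ⊢ <;> omega
          · exact absurd had (mul_ne_zero ha hd0)
          · have h2 : varL (d :: w') = varL (1*a :: w') :=
              varL_sign_replace (by nlinarith) w'
            rw [varL_cons_cons_ne hεa hd0, h2]
            have h1 := ih w' (-s) 1 a (mySignNeg hs) (Or.inl rfl) ha ht
            have hind : (if ε*a*d < 0 then 1 else 0) = (if ε = -1 then 1 else 0) := by
              rcases hε with rfl|rfl <;> norm_num <;> nlinarith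
            rw [hind]
            rcases hs with rfl|rfl <;> rcases hε with rfl|rfl <;>
              simp only [List.length_cons] <;> norm_num at h1 ⊢ <;> omega
      · have hd' : d = s * c := hd hc
        subst hd'
        have hsc : s * c ≠ 0 := mul_ne_zero hsz hc
        rw [varL_cons_cons_ne ha hc, varL_cons_cons_ne hεa hsc]
        have h1 := ih w' (-s) s c (mySignNeg hs) hs hc ht
        have hac : a*c ≠ 0 := mul_ne_zero ha hc
        rcases hs with rfl|rfl <;> rcases hε with rfl|rfl <;>
          simp only [List.length_cons] <;> norm_num at h1 ⊢ <;>
          rcases hac.lt_or_gt with h3|h3 <;>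
          split_ifs <;> first | omega | (exfalso; nlinarith)

lemma srel_cons {s a b : ℝ} {v w : List ℝ} :
    SRel s (a::v) (b::w) ↔ ((a ≠ 0 → b = s*a) ∧ SRel (-s) v w) := Iff.rfl

lemma lemA : ∀ (v w : List ℝ) (s : ℝ), (s = 1 ∨ s = -1) → SRel s v w →
    varL v + varL w ≤ v.length - 1 := by
  intro v
  induction v with
  | nil =>
    intro w s hs hrel
    cases w with
    | nil => simp
    | cons b t => exact absurd hrel (by simp [SRel])
  | cons c v' ih =>
    intro w s hs hrel
    cases w with
    | nil => exact absurd hrel (by simp [SRel])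
    | cons d w' =>
      obtain ⟨hd, ht⟩ := hrel
      have hlen := srel_len ht
      by_cases hc : c = 0
      · subst hc
        rw [varL_cons_zero]
        rcases Nat.eq_zero_or_pos v'.length with h0|h0
        · have hv' : v' = [] := List.length_eq_zero_iff.mp h0
          have hw' : w' = [] := List.length_eq_zero_iff.mp (by omega)
          subst hv'; subst hw'
          simp
        · have h1 := ih w' (-s) (mySignNeg hs) ht
          have h2 := varL_cons_le d w'
          simp only [List.length_cons]
          omega
      · have hd' : d = s * c := hd hc
        subst hd'
        have h1 := lemM v' w' (-s) s c (mySignNeg hs) hs hc ht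
        have hss : (if s = -s then (1:ℕ) else 0) = 0 := by
          rcases hs with rfl|rfl <;> norm_num
        rw [hss] at h1
        simp only [List.length_cons]
        omega

lemma lemE : ∀ (v : List ℝ) (s a : ℝ), (s = 1 ∨ s = -1) → a ≠ 0 →
    ∃ w, SRel s v w ∧ (∀ x ∈ w, x ≠ 0) ∧ varL (a::v) + varL ((-s*a)::w) = v.length := by
  intro v
  induction v with
  | nil =>
    intro s a hs ha
    exact ⟨[], trivial, by simp, by simp⟩
  | cons c v' ih =>
    intro s a hs ha
    have hsz : s ≠ 0 := mySignNeZero hs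
    have hs2 : s * s = 1 := by rcases hs with rfl|rfl <;> norm_num
    by_cases hc : c = 0
    · subst hc
      obtain ⟨w', hrel, hnz, heq⟩ := ih (-s) a (mySignNeg hs) ha
      simp only [neg_neg] at heq
      refine ⟨(s*a)::w', ⟨fun h => absurd rfl h, hrel⟩, ?_, ?_⟩
      · intro x hx
        rcases List.mem_cons.mp hx with rfl|hx
        · exact mul_ne_zero hsz ha
        · exact hnz x hx
      · have hsa : s * a ≠ 0 := mul_ne_zero hsz ha
        have hnsa : -s * a ≠ 0 := mul_ne_zero (neg_ne_zero.mpr hsz) ha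
        rw [varL_cons_cons_zero, varL_cons_cons_ne hnsa hsa]
        have hpos : (0:ℝ) < (s*a)*(s*a) := mul_self_pos.mpr hsa
        rw [if_pos (by nlinarith : -s*a*(s*a) < 0)]
        simp only [List.length_cons]
        omega
    · obtain ⟨w', hrel, hnz, heq⟩ := ih (-s) c (mySignNeg hs) hc
      simp only [neg_neg] at heq
      refine ⟨(s*c)::w', ⟨fun _ => rfl, hrel⟩, ?_, ?_⟩
      · intro x hx
        rcases List.mem_cons.mp hx with rfl|hx
        · exact mul_ne_zero hsz hc
        · exact hnz x hx
      · have hsc : s * c ≠ 0 := mul_ne_zero hsz hc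
        have hnsa : -s * a ≠ 0 := mul_ne_zero (neg_ne_zero.mpr hsz) ha
        rw [varL_cons_cons_ne ha hc, varL_cons_cons_ne hnsa hsc]
        have hac : a * c ≠ 0 := mul_ne_zero ha hc
        have hkey : -s*a*(s*c) = -(a*c) := by
          rw [show -s*a*(s*c) = -(s*s)*(a*c) by ring, hs2]; ring
        simp only [List.length_cons]
        rcases hac.lt_or_gt with h3|h3
        · rw [if_pos h3, if_neg (by rw [hkey]; linarith)]
          omega
        · rw [if_neg (by linarith), if_pos (by rw [hkey]; linarith)]
          omega

lemma lemF : ∀ (v : List ℝ) (s : ℝ), (s = 1 ∨ s = -1) →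
    ∃ w, SRel s v w ∧ (∀ x ∈ w, x ≠ 0) ∧ varL v + varL w + 1 = max v.length 1 := by
  intro v
  induction v with
  | nil =>
    intro s hs
    exact ⟨[], trivial, by simp, by simp⟩
  | cons c v' ih =>
    intro s hs
    have hsz : s ≠ 0 := mySignNeZero hs
    by_cases hc : c = 0
    · subst hc
      obtain ⟨w', hrel, hnz, heq⟩ := ih (-s) (mySignNeg hs)
      cases w' with
      | nil =>
        have hv' : v' = [] := List.length_eq_zero_iff.mp (by simpa using srel_len hrel)
        subst hv'
        refine ⟨[1], ⟨fun h => absurd rfl h, trivial⟩, by simp, ?_⟩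
        simp [varL_cons_zero]
      | cons e w'' =>
        have he : e ≠ 0 := hnz e (List.mem_cons_self)
        have hlen : 1 ≤ v'.length := by
          have := srel_len hrel; simp at this; omega
        refine ⟨(-e)::e::w'', ⟨fun h => absurd rfl h, hrel⟩, ?_, ?_⟩
        · intro x hx
          rcases List.mem_cons.mp hx with rfl|hx
          · exact neg_ne_zero.mpr he
          · exact hnz x hx
        · rw [varL_cons_zero, varL_cons_cons_ne (neg_ne_zero.mpr he) he]
          have hpos : (0:ℝ) < e*e := mul_self_pos.mpr he
          rw [if_pos (by nlinarith : -e*e < 0)]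
          simp only [List.length_cons]
          omega
    · obtain ⟨w', hrel, hnz, heq⟩ := lemE v' (-s) c (mySignNeg hs) hc
      simp only [neg_neg] at heq
      refine ⟨(s*c)::w', ⟨fun _ => rfl, hrel⟩, ?_, ?_⟩
      · intro x hx
        rcases List.mem_cons.mp hx with rfl|hx
        · exact mul_ne_zero hsz hc
        · exact hnz x hx
      · simp only [List.length_cons]
        omega


lemma srel_ofFn {n : ℕ} (s : ℝ) (v w : Fin n → ℝ)
    (h : ∀ i, v i ≠ 0 → w i = s * (-1)^(i:ℕ) * v i) :
    SRel s (List.ofFn v) (List.ofFn w) := by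
  induction n generalizing s with
  | zero => simp [List.ofFn_zero]; trivial
  | succ n ih =>
    rw [List.ofFn_succ, List.ofFn_succ]
    refine ⟨fun h0 => by simpa using h 0 h0, ?_⟩
    apply ih
    intro i hi
    have h2 := h i.succ hi
    rw [h2]
    simp [Fin.val_succ, pow_succ]
    try ring

lemma srel_ofFn_rev {n : ℕ} (s : ℝ) (v w : Fin n → ℝ)
    (h : SRel s (List.ofFn v) (List.ofFn w)) :
    ∀ i, v i ≠ 0 → w i = s * (-1)^(i:ℕ) * v i := by
  induction n generalizing s with
  | zero => intro i; exact i.elim0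
  | succ n ih =>
    rw [List.ofFn_succ, List.ofFn_succ] at h
    obtain ⟨h0, ht⟩ := h
    intro i
    refine Fin.cases ?_ ?_ i
    · intro hv0; simpa using h0 hv0
    · intro j hj
      have h2 := ih (-s) _ _ ht j hj
      rw [h2]
      simp [Fin.val_succ, pow_succ]
      try ring

theorem stmt0 (n : ℕ) (v : Fin n → ℝ) (hv : v ≠ 0) :
    var v + varbar (altv v) = n - 1 := by
  cases n with
  | zero => exact absurd (funext fun i => i.elim0) hv
  | succ m =>
    obtain ⟨wl, hrel, hnz, heq⟩ := lemF (List.ofFn v) 1 (Or.inl rfl)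
    have hlen : wl.length = m+1 := by
      have := srel_len hrel; simpa using this.symm
    have hlt : ∀ i : Fin (m+1), (i:ℕ) < wl.length := by
      intro i; rw [hlen]; exact i.isLt
    set wfn : Fin (m+1) → ℝ := fun i => wl[(i:ℕ)]'(hlt i) with hwfn
    have hofn : List.ofFn wfn = wl := by
      apply List.ext_getElem (by simp [hlen])
      intro i h1 h2
      rw [List.getElem_ofFn]
    have hw : var wfn = varL wl := by
      show varL (List.ofFn wfn) = varL wl
      rw [hofn]
    have heq' : varL (List.ofFn v) + varL wl + 1 = m + 1 := by
      simpa using heq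
    have hb := srel_ofFn_rev 1 v wfn (by rw [hofn]; exact hrel)
    have hagree : ∀ i, altv v i ≠ 0 → wfn i = altv v i := by
      intro i hi
      have hvi : v i ≠ 0 := by
        intro h0; exact hi (by simp [altv, h0])
      rw [hb i hvi]
      simp [altv]
    set S : Set ℕ :=
      {m' | ∃ w : Fin (m+1) → ℝ, (∀ i, altv v i ≠ 0 → w i = altv v i) ∧ var w = m'} with hS
    have hvv : var v = varL (List.ofFn v) := rfl
    have hub : ∀ k ∈ S, k ≤ m - var v := by
      rintro k ⟨w, hw1, rfl⟩
      have hrel2 : SRel 1 (List.ofFn v) (List.ofFn w) := by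
        apply srel_ofFn
        intro i hvi
        have hai : altv v i ≠ 0 := by
          simp only [altv, ne_eq, mul_eq_zero, not_or]
          exact ⟨pow_ne_zero _ (by norm_num), hvi⟩
        rw [hw1 i hai]
        simp [altv]
      have h1 := lemA (List.ofFn v) (List.ofFn w) 1 (Or.inl rfl) hrel2
      have h2 : (List.ofFn v).length = m+1 := by simp
      have h3 : var w = varL (List.ofFn w) := rfl
      rw [h3]
      omega
    have hmem : (m - var v) ∈ S := by
      refine ⟨wfn, hagree, ?_⟩
      rw [hw]
      omega
    have hgr : IsGreatest S (m - var v) := ⟨hmem, hub⟩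
    have hsup : varbar (altv v) = m - var v := by
      show sSup S = m - var v
      exact hgr.csSup_eq
    rw [hsup]
    omega
end

section
/- Let Z : R^n → R^{k+m} be a surjective linear map with row span W (an element of Gr_{k+m,n}). Then the map f_Z sending an m-dimensional subspace X of W to Z(X^⊥) is a well-defined bijection from the set of m-dimensional subspaces of W onto the set of k-dimensional subspaces of R^{k+m}. -/
open scoped BigOperators

/-!
`X ↦ Xᗮ` is a bijection from the `m`-dimensional subspaces of `(ker Z)ᗮ` onto the
`(n - m)`-dimensional subspaces containing `ker Z`. By the correspondence theorem, `Submodule.map Z`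
maps subspaces containing `ker Z` bijectively onto subspaces of `ℝ^(k+m)`, lowering the dimension by
`dim ker Z = n - (k + m)`, so the composite lands exactly on the `k`-dimensional subspaces.
-/

section MapComap

variable {K V V₂ : Type*} [Field K] [AddCommGroup V] [Module K V] [AddCommGroup V₂] [Module K V₂]
  [FiniteDimensional K V] (f : V →ₗ[K] V₂)

lemma Submodule.finrank_map_add_finrank_ker_of_ker_le {p : Submodule K V}
    (h : LinearMap.ker f ≤ p) :
    Module.finrank K (p.map f) + Module.finrank K (LinearMap.ker f) = Module.finrank K p := by
  have hker : LinearMap.ker (f.domRestrict p) = (LinearMap.ker f).comap p.subtype :=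
    LinearMap.ker_comp p.subtype f
  rw [← LinearMap.range_domRestrict, ← (Submodule.comapSubtypeEquivOfLe h).finrank_eq, ← hker]
  exact LinearMap.finrank_range_add_finrank_ker _

lemma Submodule.finrank_comap_of_surjective (hf : Function.Surjective f) (q : Submodule K V₂) :
    Module.finrank K (q.comap f) = Module.finrank K q + Module.finrank K (LinearMap.ker f) := by
  rw [← finrank_map_add_finrank_ker_of_ker_le f (LinearMap.ker_le_comap f),
    Submodule.map_comap_eq_of_surjective hf]

lemma Submodule.bijOn_map_of_surjective (hf : Function.Surjective f) (r : ℕ) :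
    Set.BijOn (Submodule.map f)
      {p | LinearMap.ker f ≤ p ∧ Module.finrank K p = r + Module.finrank K (LinearMap.ker f)}
      {q | Module.finrank K q = r} := by
  refine Set.InvOn.bijOn (f' := Submodule.comap f) ⟨?_, ?_⟩ ?_ ?_
  · rintro p ⟨hp, -⟩
    exact Submodule.comap_map_eq_self hp
  · intro q _
    exact Submodule.map_comap_eq_of_surjective hf q
  · rintro p ⟨hp, hdim⟩
    have := Submodule.finrank_map_add_finrank_ker_of_ker_le f hp
    change Module.finrank K (p.map f) = r
    omega
  · rintro q (hq : Module.finrank K q = r)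
    exact ⟨LinearMap.ker_le_comap f, hq ▸ Submodule.finrank_comap_of_surjective f hf q⟩

end MapComap

lemma Submodule.bijOn_orthogonal {𝕜 E : Type*} [RCLike 𝕜] [NormedAddCommGroup E] [InnerProductSpace 𝕜 E]
    [FiniteDimensional 𝕜 E] (K : Submodule 𝕜 E) {m r : ℕ} (hmr : m + r = Module.finrank 𝕜 E) :
    Set.BijOn (fun X : Submodule 𝕜 E => Xᗮ)
      {X | X ≤ Kᗮ ∧ Module.finrank 𝕜 X = m} {P | K ≤ P ∧ Module.finrank 𝕜 P = r} := by
  refine Set.InvOn.bijOn (f' := fun X => Xᗮ)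
    ⟨fun X _ => X.orthogonal_orthogonal, fun P _ => P.orthogonal_orthogonal⟩ ?_ ?_
  · rintro X ⟨hX, hdim⟩
    have := X.finrank_add_finrank_orthogonal
    dsimp only
    exact ⟨Submodule.le_orthogonal_iff_le_orthogonal.mp hX, by omega⟩
  · rintro P ⟨hP, hdim⟩
    have := P.finrank_add_finrank_orthogonal
    dsimp only
    exact ⟨Submodule.orthogonal_le_orthogonal_iff.mpr hP, by omega⟩

theorem stmt2 (n k m : ℕ)
    (Z : EuclideanSpace ℝ (Fin n) →ₗ[ℝ] EuclideanSpace ℝ (Fin (k + m)))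
    (hZ : Function.Surjective Z) :
    Set.BijOn (fun X : Submodule ℝ (EuclideanSpace ℝ (Fin n)) => Submodule.map Z Xᗮ)
      {X | X ≤ (LinearMap.ker Z)ᗮ ∧ Module.finrank ℝ X = m}
      {Y : Submodule ℝ (EuclideanSpace ℝ (Fin (k + m))) | Module.finrank ℝ Y = k} := by
  have hrank := LinearMap.finrank_range_add_finrank_ker Z
  rw [LinearMap.range_eq_top.mpr hZ, finrank_top, finrank_euclideanSpace_fin] at hrank
  have hdim : m + (k + Module.finrank ℝ (LinearMap.ker Z)) =
      Module.finrank ℝ (EuclideanSpace ℝ (Fin n)) := by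
    omega
  exact (Submodule.bijOn_map_of_surjective Z hZ k).comp
    (Submodule.bijOn_orthogonal (LinearMap.ker Z) hdim)
end

section
/- Let 0 < t_1 < ... < t_n and let A be the n × (k+1) matrix with entries A_{i,j} = t_i^j for 1 ≤ i ≤ n, 0 ≤ j ≤ k. Then every minor of A (of every size) is positive. -/
open scoped BigOperators

/-!
The generalized Vandermonde matrix `(x i ^ e j)` with distinct positive `x i` and distinct
exponents `e j` is nonsingular: a kernel vector gives a nonzero polynomial with at most `l` monomials and `l`
distinct positive roots, contradicting Descartes' rule of signs. To get the sign, deform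
`x i` to `x i ^ s = exp (s * log x i)` for `s ≥ 1`. The determinant stays nonzero, and it is a
signed sum of `exp (s * ∑ i, log x (σ i) * e i)` over permutations `σ`; by the strict
rearrangement inequality the identity term dominates as `s → ∞`, so the determinant is
eventually positive, hence positive at `s = 1`.
-/

open Polynomial Finset Filter Topology

namespace Polynomial

theorem signVariations_lt_card_support {R : Type*} [Semiring R] [LinearOrder R] {P : R[X]}
    (hP : P ≠ 0) : signVariations P < #P.support := by
  induction hn : #P.support generalizing P with
  | zero => exact absurd (card_support_eq_zero.1 hn) hP
  | succ n ih =>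
    by_cases hE : P.eraseLead = 0
    · obtain ⟨k, x, -, rfl⟩ :=
        card_support_eq_one.1 (card_support_eq_one_of_eraseLead_eq_zero hP hE)
      simp [C_mul_X_pow_eq_monomial, signVariations_monomial]
    · exact (signVariations_le_eraseLead_succ P).trans_lt
        (Nat.succ_lt_succ (ih hE (card_support_eraseLead' hn)))

theorem card_filter_roots_pos_lt_card_support {R : Type*} [CommRing R] [LinearOrder R]
    [IsStrictOrderedRing R] {P : R[X]} (hP : P ≠ 0) :
    #{x ∈ P.roots.toFinset | 0 < x} < #P.support := calc
  #{x ∈ P.roots.toFinset | 0 < x} ≤ P.roots.countP (0 < ·) := by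
    rw [Multiset.countP_eq_card_filter, ← Multiset.toFinset_filter]
    exact Multiset.toFinset_card_le _
  _ ≤ signVariations P := roots_countP_pos_le_signVariations P
  _ < #P.support := signVariations_lt_card_support hP

end Polynomial

theorem Equiv.Perm.sum_comp_mul_lt_sum_mul {α : Type*} [CommRing α] [LinearOrder α]
    [IsStrictOrderedRing α] {n : ℕ} {f g : Fin n → α} (hf : StrictMono f)
    (hg : StrictMono g) {σ : Equiv.Perm (Fin n)} (hσ : σ ≠ 1) :
    ∑ i, f (σ i) * g i < ∑ i, f i * g i := by
  refine (hf.monotone.monovary hg.monotone).sum_comp_perm_mul_lt_sum_mul_iff.2 fun h => hσ ?_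
  refine σ.monotone_iff.1 fun i j hij => ?_
  rcases hij.eq_or_lt with rfl | hij
  · rfl
  · exact hf.le_iff_le.1 (h (hg hij))

theorem Matrix.det_of_pow_ne_zero {R : Type*} [Field R] [LinearOrder R] [IsStrictOrderedRing R]
    {l : ℕ} {x : Fin l → R} (hx0 : ∀ i, 0 < x i) (hx : Function.Injective x)
    {e : Fin l → ℕ} (he : Function.Injective e) :
    (Matrix.of fun i j => x i ^ e j).det ≠ 0 := by
  intro hdet
  obtain ⟨a, ha, hva⟩ := Matrix.exists_mulVec_eq_zero_iff.2 hdet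
  set p : R[X] := ∑ j, monomial (e j) (a j)
  have hcoeff (j : Fin l) : p.coeff (e j) = a j := by
    simp [p, coeff_monomial, he.eq_iff]
  have hp : p ≠ 0 := fun h => ha (funext fun j => by simpa [h] using (hcoeff j).symm)
  have hsupport : #p.support ≤ l := calc
    #p.support ≤ #(univ.image e) := card_le_card fun m hm => by
      contrapose! hm
      simp_all [p, coeff_monomial]
    _ ≤ l := card_image_le.trans_eq (card_fin l)
  have hroots : l ≤ #{y ∈ p.roots.toFinset | 0 < y} := calc
    l = #(univ.image x) := by rw [card_image_of_injective _ hx, card_fin]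
    _ ≤ _ := card_le_card fun y hy => by
      obtain ⟨i, -, rfl⟩ := mem_image.1 hy
      refine mem_filter.2 ⟨Multiset.mem_toFinset.2 ((mem_roots hp).2 ?_), hx0 i⟩
      simpa [p, eval_finsetSum, Matrix.mulVec, dotProduct, mul_comm] using congrFun hva i
  exact (card_filter_roots_pos_lt_card_support hp).not_ge (hsupport.trans hroots)

theorem eventually_pos_sum_mul_exp {ι : Type*} [Fintype ι] {a w : ι → ℝ} {i₀ : ι}
    (ha : 0 < a i₀) (hw : ∀ i ≠ i₀, w i < w i₀) :
    ∀ᶠ s in atTop, 0 < ∑ i, a i * Real.exp (s * w i) := by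
  classical
  have hlim :
      Tendsto (fun s => ∑ i, a i * Real.exp (s * (w i - w i₀))) atTop (𝓝 (a i₀)) := by
    rw [← Fintype.sum_ite_eq' i₀ a]
    refine tendsto_finsetSum _ fun i _ => ?_
    split_ifs with h
    · simp [h]
    · have : Tendsto (fun s => s * (w i - w i₀)) atTop atBot :=
        tendsto_id.atTop_mul_const_of_neg (sub_neg.2 (hw i h))
      simpa using (Real.tendsto_exp_atBot.comp this).const_mul (a i)
  filter_upwards [hlim.eventually (eventually_gt_nhds ha)] with s hs
  have hfactor : ∑ i, a i * Real.exp (s * w i) =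
      (∑ i, a i * Real.exp (s * (w i - w i₀))) * Real.exp (s * w i₀) := by
    rw [sum_mul]
    congr! 1 with i
    rw [mul_assoc, ← Real.exp_add]
    ring_nf
  exact hfactor ▸ mul_pos hs (Real.exp_pos _)

theorem pos_of_continuousOn_Ici_of_ne_zero {f : ℝ → ℝ} {a : ℝ}
    (hf : ContinuousOn f (Set.Ici a)) (h0 : ∀ s ∈ Set.Ici a, f s ≠ 0)
    (hev : ∀ᶠ s in atTop, 0 < f s) : 0 < f a := by
  obtain ⟨S, hS, haS⟩ := (hev.and (eventually_ge_atTop a)).exists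
  by_contra! ha
  obtain ⟨z, hz, hfz⟩ :=
    intermediate_value_Icc haS (hf.mono Set.Icc_subset_Ici_self) ⟨ha, hS.le⟩
  exact h0 z hz.1 hfz

theorem Matrix.det_of_exp_mul_pow_eq_sum {l : ℕ} (L : Fin l → ℝ) (e : Fin l → ℕ) (s : ℝ) :
    (Matrix.of fun i j => Real.exp (s * L i) ^ e j).det =
      ∑ σ : Equiv.Perm (Fin l),
        (Equiv.Perm.sign σ : ℝ) * Real.exp (s * ∑ i, L (σ i) * e i) := by
  rw [Matrix.det_apply']
  refine sum_congr rfl fun σ _ => ?_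
  rw [mul_sum, Real.exp_sum]
  congr! 2 with i
  rw [Matrix.of_apply, ← Real.exp_nat_mul]
  ring_nf

theorem Matrix.det_of_pow_pos {l : ℕ} {x : Fin l → ℝ} (hx0 : ∀ i, 0 < x i)
    (hx : StrictMono x) {e : Fin l → ℕ} (he : StrictMono e) :
    0 < (Matrix.of fun i j => x i ^ e j).det := by
  set L := fun i => Real.log (x i)
  have hL : StrictMono L := fun i j hij => Real.log_lt_log (hx0 i) (hx hij)
  set f := fun s => (Matrix.of fun i j => Real.exp (s * L i) ^ e j).det
  have hf1 : f 1 = (Matrix.of fun i j => x i ^ e j).det := by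
    simp [f, L, Real.exp_log (hx0 _)]
  rw [← hf1]
  refine pos_of_continuousOn_Ici_of_ne_zero ?_ (fun s hs => ?_) ?_
  · fun_prop
  · refine Matrix.det_of_pow_ne_zero (fun i => Real.exp_pos _) (StrictMono.injective ?_)
      he.injective
    exact fun i j hij => Real.exp_lt_exp.2 (mul_lt_mul_of_pos_left (hL hij) (one_pos.trans_le hs))
  · simp only [f, Matrix.det_of_exp_mul_pow_eq_sum]
    refine eventually_pos_sum_mul_exp (i₀ := 1) (by simp) fun σ hσ => ?_
    simpa using σ.sum_comp_mul_lt_sum_mul hL (fun i j h => by exact_mod_cast he h) hσ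

theorem stmt4 (n k : ℕ) (t : Fin n → ℝ) (ht0 : ∀ i, 0 < t i) (ht : StrictMono t)
    (l : ℕ) (r : Fin l → Fin n) (c : Fin l → Fin (k + 1))
    (hr : StrictMono r) (hc : StrictMono c) :
    0 < Matrix.det
      ((Matrix.of fun (i : Fin n) (j : Fin (k + 1)) => t i ^ (j : ℕ)).submatrix r c) :=
  Matrix.det_of_pow_pos (fun i => ht0 (r i)) (ht.comp hr) fun _ _ hij => hc hij
end

section
/- Define Sign_{n,k,1}-bar as the set of nonzero sign vectors σ ∈ {0,+,-}^n with varbar(σ) = k whose first nonzero component at position i equals (-1)^{i-1}. Then for any two σ, τ ∈ Sign_{n,k,1}-bar, it is not the case that σ ≤ -τ, where σ ≤ τ means σ_i = τ_i for all i with σ_i ≠ 0. -/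
/-!
The sign changes of a list of nonzero reals have the parity of the sign of the product of its
first and last entries. Let `i` be the first nonzero position of `σ`, so `σ i = (-1)^i`; since
`σ ≤ -τ`, the first nonzero position `j` of `τ` satisfies `j < i`. If `w` is a completion of `τ`
with `varbar τ = k` sign changes, then `-w` completes `σ`, and its entries at `j` and `i` do not
alternate; by the parity count its first `i + 1` entries carry at most `i - 1` sign changes.
Replacing them by `1, -1, 1, …` gives a completion of `σ` with one more sign change, so
`varbar σ > k`.
-/

open scoped BigOperators

lemma listVar_le_length_sub_one : ∀ l : List ℝ, listVar l ≤ l.length - 1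
  | [] | [_] => le_rfl
  | _ :: b :: t => by
    have := listVar_le_length_sub_one (b :: t)
    simp only [listVar, List.length_cons] at *
    split <;> omega

lemma listVar_append_cons (l₁ : List ℝ) (b : ℝ) (l₂ : List ℝ) :
    listVar (l₁ ++ b :: l₂) = listVar (l₁ ++ [b]) + listVar (b :: l₂) := by
  induction l₁ with
  | nil => simp [listVar]
  | cons a t ih =>
    cases t with
    | nil => simp [listVar]
    | cons c t' =>
      simp only [List.cons_append, listVar] at *
      omega

lemma neg_one_pow_listVar_mul_pos : ∀ (l : List ℝ) (hl : l ≠ []), (∀ x ∈ l, x ≠ 0) →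
    0 < (-1) ^ listVar l * (l.head hl * l.getLast hl)
  | [a], _, h => by simpa [listVar] using mul_self_pos.2 (h a (by simp))
  | a :: b :: t, _, h => by
    have ih := neg_one_pow_listVar_mul_pos (b :: t) (List.cons_ne_nil _ _)
      fun x hx => h x (List.mem_cons_of_mem _ hx)
    have hab : 0 < (-1) ^ (if a * b < 0 then 1 else 0) * (a * b) := by
      have : a * b ≠ 0 := mul_ne_zero (h a (by simp)) (h b (by simp))
      split_ifs with hab
      · linarith
      · simpa using lt_of_le_of_ne (not_lt.1 hab) this.symm
    have hbb : 0 < b * b := mul_self_pos.2 (h b (by simp))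
    rw [List.head_cons, List.getLast_cons_cons] at *
    refine pos_of_mul_pos_right ?_ hbb.le
    convert mul_pos hab ih using 1
    rw [listVar, pow_add]
    ring

lemma listVar_ofFn_neg_one_pow :
    ∀ m : ℕ, listVar (List.ofFn fun k : Fin (m + 1) => (-1 : ℝ) ^ (k : ℕ)) = m
  | 0 => rfl
  | m + 1 => by
    have ih := listVar_ofFn_neg_one_pow m
    rw [List.ofFn_succ_last, List.ofFn_succ_last, List.append_assoc, List.singleton_append,
      listVar_append_cons]
    rw [List.ofFn_succ_last] at ih
    simp only [Fin.val_castSucc, Fin.val_last] at ih ⊢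
    rw [ih]
    simp [listVar, pow_succ]

noncomputable def signVar (l : List ℝ) : ℕ := listVar (l.filter (· ≠ 0))

lemma var_eq_signVar_ofFn {n : ℕ} (v : Fin n → ℝ) : var v = signVar (List.ofFn v) := rfl

lemma signVar_le_length_sub_one (l : List ℝ) : signVar l ≤ l.length - 1 :=
  (listVar_le_length_sub_one _).trans (Nat.sub_le_sub_right (List.length_filter_le _ _) 1)

lemma neg_one_pow_signVar_mul_pos {l : List ℝ} (hl : l ≠ []) (h₀ : l.head hl ≠ 0)
    (h₁ : l.getLast hl ≠ 0) : 0 < (-1) ^ signVar l * (l.head hl * l.getLast hl) := by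
  have := neg_one_pow_listVar_mul_pos (l.filter (· ≠ 0))
    (List.ne_nil_of_mem (List.mem_filter.2 ⟨List.head_mem hl, by simpa using h₀⟩))
    fun x hx => by simpa using (List.mem_filter.1 hx).2
  rwa [List.head_filter_of_pos hl (by simpa using h₀),
    List.getLast_filter_of_pos hl (by simpa using h₁)] at this

lemma signVar_eq_take_add_drop (l : List ℝ) {i : ℕ} (hi : i < l.length) (h : l[i] ≠ 0) :
    signVar l = signVar (l.take (i + 1)) + signVar (l.drop i) := by
  conv_lhs => rw [← List.take_append_drop i l, List.drop_eq_getElem_cons hi]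
  rw [← List.take_concat_get hi, List.drop_eq_getElem_cons hi]
  simp only [signVar, List.concat_eq_append, List.filter_append, List.filter_cons, h, ne_eq,
    not_false_eq_true, decide_true, if_true, List.filter_nil]
  exact listVar_append_cons _ _ _

lemma listVar_map_neg : ∀ l : List ℝ, listVar (l.map Neg.neg) = listVar l
  | [] | [_] => rfl
  | a :: b :: t => by
    simp only [List.map_cons, listVar, neg_mul_neg, ← listVar_map_neg (b :: t)]

lemma signVar_map_neg (l : List ℝ) : signVar (l.map Neg.neg) = signVar l := by
  have hfilter : (l.map Neg.neg).filter (· ≠ 0) = (l.filter (· ≠ 0)).map Neg.neg := by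
    rw [List.filter_map]
    congr 2
    funext x
    simp
  rw [signVar, signVar, hfilter, listVar_map_neg]

lemma signVar_take_succ_lt (l : List ℝ) {j i : ℕ} (hji : j < i) (hi : i < l.length) (hj₀ : l[j] ≠ 0)
    (hi₀ : l[i] ≠ 0) (h : (-1) ^ (i - j) * (l[j] * l[i]) < 0) : signVar (l.take (i + 1)) < i := by
  have hsplit := signVar_eq_take_add_drop (l.take (i + 1)) (i := j)
    (by simp only [List.length_take]; omega) (by simpa using hj₀)
  set M := (l.take (i + 1)).drop j with hM
  have hMlen : M.length = i - j + 1 := by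
    simp only [hM, List.length_drop, List.length_take]; omega
  have hMne : M ≠ [] := List.ne_nil_of_length_pos (by omega)
  have hhead : M.head hMne = l[j] := by simp [List.head_eq_getElem, hM]
  have hlast : M.getLast hMne = l[i] := by
    simp only [hM, List.getLast_eq_getElem, List.length_drop, List.length_take, List.getElem_drop,
      List.getElem_take]
    congr 1
    omega
  have hprefix : signVar ((l.take (i + 1)).take (j + 1)) ≤ j := by
    have := signVar_le_length_sub_one ((l.take (i + 1)).take (j + 1))
    simp only [List.length_take] at this; omega
  have hM_le : signVar M ≤ i - j := by
    have := signVar_le_length_sub_one M; omega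
  have hsign := neg_one_pow_signVar_mul_pos hMne (hhead ▸ hj₀) (hlast ▸ hi₀)
  rw [hhead, hlast] at hsign
  have hM_ne : signVar M ≠ i - j := fun heq => by rw [heq] at hsign; linarith
  omega

lemma var_neg {n : ℕ} (v : Fin n → ℝ) : var (-v) = var v := by
  rw [var_eq_signVar_ofFn, var_eq_signVar_ofFn, ← signVar_map_neg (List.ofFn v), List.map_ofFn]
  rfl

lemma var_le {n : ℕ} (v : Fin n → ℝ) : var v ≤ n := by
  have := signVar_le_length_sub_one (List.ofFn v)
  rw [List.length_ofFn] at this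
  rw [var_eq_signVar_ofFn]
  omega

lemma bddAbove_var_of_agree {n : ℕ} (v : Fin n → ℝ) :
    BddAbove {m | ∃ w : Fin n → ℝ, (∀ i, v i ≠ 0 → w i = v i) ∧ var w = m} :=
  ⟨n, fun _ ⟨w, _, hw⟩ => hw ▸ var_le w⟩

lemma var_le_varbar {n : ℕ} {v w : Fin n → ℝ} (h : ∀ i, v i ≠ 0 → w i = v i) :
    var w ≤ varbar v :=
  le_csSup (bddAbove_var_of_agree v) ⟨w, h, rfl⟩

lemma exists_var_eq_varbar {n : ℕ} (v : Fin n → ℝ) :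
    ∃ w : Fin n → ℝ, (∀ i, v i ≠ 0 → w i = v i) ∧ var w = varbar v :=
  have hne : {m | ∃ w : Fin n → ℝ, (∀ i, v i ≠ 0 → w i = v i) ∧ var w = m}.Nonempty :=
    ⟨var v, v, fun _ _ => rfl, rfl⟩
  Nat.sSup_mem hne (bddAbove_var_of_agree v)

lemma var_lt_of_neg_one_pow_mul_neg {n : ℕ} (u : Fin n → ℝ) {j i : Fin n} (hji : j < i)
    (hj : u j ≠ 0) (hi : u i ≠ 0) (h : (-1) ^ (i - j : ℕ) * (u j * u i) < 0) :
    var u < i + signVar ((List.ofFn u).drop i) := by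
  have hlt := signVar_take_succ_lt (List.ofFn u) hji (by simp) (by simpa using hj)
    (by simpa using hi) (by simpa using h)
  rw [var_eq_signVar_ofFn, signVar_eq_take_add_drop _ (i := i) (by simp) (by simpa using hi)]
  omega

lemma var_alternating_prefix {n : ℕ} (u : Fin n → ℝ) (i : Fin n) (hi : u i = (-1) ^ (i : ℕ)) :
    var (fun m => if m < i then (-1) ^ (m : ℕ) else u m) = i + signVar ((List.ofFn u).drop i) := by
  set u' : Fin n → ℝ := fun m => if m < i then (-1) ^ (m : ℕ) else u m
  have hu'_le : ∀ m ≤ i, u' m = (-1) ^ (m : ℕ) := by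
    intro m hm
    rcases hm.lt_or_eq with hm | rfl
    · exact if_pos hm
    · exact (if_neg (lt_irrefl m)).trans hi
  have htake :
      (List.ofFn u').take (i + 1) = List.ofFn fun k : Fin (i + 1) => (-1 : ℝ) ^ (k : ℕ) := by
    apply List.ext_getElem
    · simp
    · intro k hk _
      simp only [List.getElem_take, List.getElem_ofFn]
      simp only [List.length_take, List.length_ofFn] at hk
      exact hu'_le _ (Fin.mk_le_of_le_val (by omega))
  have hdrop : (List.ofFn u').drop i = (List.ofFn u).drop i := by
    apply List.ext_getElem
    · simp
    · intro k _ _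
      simp only [List.getElem_drop, List.getElem_ofFn, u']
      exact if_neg (by simp [Fin.lt_def])
  have hu'i : u' i ≠ 0 := by simp [hu'_le i le_rfl]
  rw [var_eq_signVar_ofFn, signVar_eq_take_add_drop _ (i := i) (by simp) (by simpa using hu'i),
    htake, hdrop, signVar, List.filter_eq_self.2, listVar_ofFn_neg_one_pow]
  simp

lemma neg_one_pow_sub_mul_neg_one_pow_mul_neg {j i : ℕ} (h : j ≤ i) :
    (-1 : ℝ) ^ (i - j) * (-(-1) ^ j * (-1) ^ i) < 0 := by
  obtain ⟨d, rfl⟩ := Nat.exists_eq_add_of_le h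
  have hsq : (-1 : ℝ) ^ d * (-(-1) ^ j * (-1) ^ (j + d)) = -((-1) ^ (j + d)) ^ 2 := by ring
  rw [Nat.add_sub_cancel_left, hsq, neg_lt_zero]
  positivity

lemma neg_agree_of_agree_of_le_neg {n : ℕ} {σ τ w : Fin n → ℝ}
    (hστ : ∀ i, σ i ≠ 0 → σ i = -τ i) (hw : ∀ i, τ i ≠ 0 → w i = τ i) :
    ∀ i, σ i ≠ 0 → (-w) i = σ i := fun i hi => by
  have hτi : τ i ≠ 0 := fun h => hi (by rw [hστ i hi, h, neg_zero])
  rw [Pi.neg_apply, hw i hτi, hστ i hi]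

lemma exists_ne_zero_forall_lt_eq_zero {ι M : Type*} [Preorder ι] [WellFoundedLT ι] [Zero M]
    {v : ι → M} (hv : v ≠ 0) : ∃ i, v i ≠ 0 ∧ ∀ m < i, v m = 0 := by
  obtain ⟨i, hi, hmin⟩ := wellFounded_lt.has_min {m | v m ≠ 0} (Function.ne_iff.1 hv)
  exact ⟨i, hi, fun m hm => not_not.1 fun h => hmin m h hm⟩

theorem stmt7_general (n k : ℕ) (σ τ : Fin n → ℝ)
    (hσ0 : σ ≠ 0) (hτ0 : τ ≠ 0)
    (hσv : varbar σ = k) (hτv : varbar τ = k)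
    (hσf : ∀ i : Fin n, (∀ j, j < i → σ j = 0) → σ i ≠ 0 → σ i = (-1 : ℝ) ^ (i : ℕ))
    (hτf : ∀ i : Fin n, (∀ j, j < i → τ j = 0) → τ i ≠ 0 → τ i = (-1 : ℝ) ^ (i : ℕ)) :
    ¬ (∀ i, σ i ≠ 0 → σ i = -τ i) := by
  intro hστ
  obtain ⟨i, hσi, hσ_lt⟩ := exists_ne_zero_forall_lt_eq_zero hσ0
  obtain ⟨j, hτj, hτ_lt⟩ := exists_ne_zero_forall_lt_eq_zero hτ0
  have hσi' := hσf i hσ_lt hσi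
  have hτj' := hτf j hτ_lt hτj
  have hτi : τ i = -(-1) ^ (i : ℕ) := by rw [← hσi', hστ i hσi, neg_neg]
  have hji : j < i := by
    refine lt_of_le_of_ne (not_lt.1 fun hij => ?_) fun hji => ?_
    · simp [hτ_lt i hij] at hτi
    · subst hji
      rw [hτi, neg_eq_iff_add_eq_zero] at hτj'
      simp at hτj'
  obtain ⟨w, hwτ, hwk⟩ := exists_var_eq_varbar τ
  have hwσ := neg_agree_of_agree_of_le_neg hστ hwτ
  have hwj : (-w) j = -(-1) ^ (j : ℕ) := by rw [Pi.neg_apply, hwτ j hτj, hτj']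
  have hwi : (-w) i = (-1) ^ (i : ℕ) := by rw [hwσ i hσi, hσi']
  have hmismatch : (-1) ^ ((i : ℕ) - j) * ((-w) j * (-w) i) < 0 := by
    rw [hwj, hwi]
    exact neg_one_pow_sub_mul_neg_one_pow_mul_neg hji.le
  have hupper := var_lt_of_neg_one_pow_mul_neg (-w) hji (by simp [hwj]) (by simp [hwi]) hmismatch
  have hlower := var_le_varbar (v := σ) (w := fun m => if m < i then (-1) ^ (m : ℕ) else (-w) m)
    fun m hm => by rw [if_neg fun h => hm (hσ_lt m h), hwσ m hm]
  rw [var_neg, hwk, hτv] at hupper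
  rw [var_alternating_prefix _ i hwi, hσv] at hlower
  omega

theorem stmt7 (n k : ℕ) (σ τ : Fin n → ℝ)
    (hσ1 : IsSignVec σ) (hτ1 : IsSignVec τ)
    (hσ0 : σ ≠ 0) (hτ0 : τ ≠ 0)
    (hσv : varbar σ = k) (hτv : varbar τ = k)
    (hσf : ∀ i : Fin n, (∀ j, j < i → σ j = 0) → σ i ≠ 0 → σ i = (-1 : ℝ) ^ (i : ℕ))
    (hτf : ∀ i : Fin n, (∀ j, j < i → τ j = 0) → τ i ≠ 0 → τ i = (-1 : ℝ) ^ (i : ℕ)) :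
    ¬ (∀ i, σ i ≠ 0 → σ i = -τ i) :=
  stmt7_general n k σ τ hσ0 hτ0 hσv hτv hσf hτf
end

section
/- For every sign vector σ ∈ {0,+,-}^n with varbar(σ) = k, there exists a sign vector τ ∈ {+,-}^n with τ ≥ σ (i.e., τ agrees with σ on the nonzero entries of σ) and var(τ) = k. Moreover, any such τ satisfies τ_n = (-1)^k · τ_1. -/
open scoped BigOperators

lemma listVar_le_length (l : List ℝ) : listVar l ≤ l.length := by
  induction l with
  | nil => simp [listVar]
  | cons a t ih =>
    cases t with
    | nil => simp [listVar]
    | cons b t' =>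
      simp only [listVar, List.length] at ih ⊢
      split <;> omega

lemma listVar_le_cons (a : ℝ) (l : List ℝ) : listVar l ≤ listVar (a :: l) := by
  cases l with
  | nil => simp [listVar]
  | cons b t => simp only [listVar]; omega

lemma sign_key {a b c : ℝ} (hb : b ≠ 0) (hac : a * c < 0) : a * b < 0 ∨ b * c < 0 := by
  by_contra h
  push_neg at h
  obtain ⟨h1, h2⟩ := h
  have hb2 : 0 < b * b := mul_self_pos.mpr hb
  nlinarith [mul_nonneg h1 h2]

lemma listVar_cons_le_cons {l₁ l₂ : List ℝ} (h : l₁.Sublist l₂) :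
    ∀ a : ℝ, (∀ x ∈ l₂, x ≠ 0) → listVar (a :: l₁) ≤ listVar (a :: l₂) := by
  induction h with
  | slnil => intro a _; exact le_refl _
  | @cons l₁ l₂ b h ih =>
    intro a hz
    have hb : b ≠ 0 := hz b (by simp)
    have h1 : listVar (a :: l₁) ≤ listVar (a :: l₂) :=
      ih a (fun x hx => hz x (List.mem_cons_of_mem _ hx))
    refine h1.trans ?_
    cases l₂ with
    | nil => simp [listVar]
    | cons c t =>
      show (if a * c < 0 then 1 else 0) + listVar (c :: t) ≤
        (if a * b < 0 then 1 else 0) + ((if b * c < 0 then 1 else 0) + listVar (c :: t))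
      rcases lt_or_ge (a * c) 0 with hac | hac
      · rcases sign_key hb hac with h' | h' <;>
          simp only [if_pos hac, if_pos h'] <;> split <;> omega
      · rw [if_neg (not_lt.2 hac)]; split_ifs <;> omega
  | @cons_cons l₁ l₂ b h ih =>
    intro a hz
    have hb : b ≠ 0 := hz b (by simp)
    show (if a * b < 0 then 1 else 0) + listVar (b :: l₁) ≤
      (if a * b < 0 then 1 else 0) + listVar (b :: l₂)
    have := ih b (fun x hx => hz x (List.mem_cons_of_mem _ hx))
    omega

lemma listVar_sublist {l₁ l₂ : List ℝ} (h : l₁.Sublist l₂) (hz : ∀ x ∈ l₂, x ≠ 0) :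
    listVar l₁ ≤ listVar l₂ := by
  induction h with
  | slnil => exact le_refl _
  | @cons l₁ l₂ b h ih =>
    exact (ih (fun x hx => hz x (List.mem_cons_of_mem _ hx))).trans (listVar_le_cons b l₂)
  | @cons_cons l₁ l₂ b h ih =>
    exact listVar_cons_le_cons h b (fun x hx => hz x (List.mem_cons_of_mem _ hx))

noncomputable def sgn (x : ℝ) : ℝ := if x < 0 then -1 else 1

lemma sgn_pm (x : ℝ) : sgn x = 1 ∨ sgn x = -1 := by
  unfold sgn; split <;> simp

lemma sgn_ne (x : ℝ) : sgn x ≠ 0 := by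
  rcases sgn_pm x with h | h <;> rw [h] <;> norm_num

lemma sgn_mul_iff {x y : ℝ} (hx : x ≠ 0) (hy : y ≠ 0) : (sgn x * sgn y < 0 ↔ x * y < 0) := by
  rcases hx.lt_or_gt with h | h <;> rcases hy.lt_or_gt with h' | h' <;>
    simp only [sgn, if_pos, if_neg, h, h', not_lt.2 h.le, not_lt.2 h'.le] <;>
    norm_num <;> nlinarith

lemma listVar_map_sgn (l : List ℝ) (hz : ∀ x ∈ l, x ≠ 0) :
    listVar (l.map sgn) = listVar l := by
  induction l with
  | nil => rfl
  | cons a t ih =>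
    cases t with
    | nil => rfl
    | cons b t' =>
      have ha : a ≠ 0 := hz a (by simp)
      have hb : b ≠ 0 := hz b (by simp)
      show (if sgn a * sgn b < 0 then 1 else 0) + listVar (sgn b :: t'.map sgn) =
        (if a * b < 0 then 1 else 0) + listVar (b :: t')
      have := ih (fun x hx => hz x (List.mem_cons_of_mem _ hx))
      simp only [List.map] at this
      rw [this]
      simp only [sgn_mul_iff ha hb]

lemma listVar_getLast : ∀ (a : ℝ) (t : List ℝ), (∀ x ∈ a :: t, x = 1 ∨ x = -1) →
    (a :: t).getLast (by simp) = (-1 : ℝ) ^ listVar (a :: t) * a := by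
  intro a t
  induction t generalizing a with
  | nil => intro _; simp [listVar]
  | cons b t ih =>
    intro h
    have hab : b = (-1 : ℝ) ^ (if a * b < 0 then 1 else 0) * a := by
      rcases h a (by simp) with ha | ha <;> rcases h b (by simp) with hb | hb <;>
        norm_num [ha, hb]
    rw [List.getLast_cons (by simp), ih b (fun x hx => h x (List.mem_cons_of_mem _ hx))]
    show (-1 : ℝ) ^ listVar (b :: t) * b =
      (-1 : ℝ) ^ ((if a * b < 0 then 1 else 0) + listVar (b :: t)) * a
    generalize listVar (b :: t) = L
    rw [pow_add]
    conv_lhs => rw [hab]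
    ring


lemma listVar_getLast' (l : List ℝ) (hl : l ≠ []) (h : ∀ x ∈ l, x = 1 ∨ x = -1) :
    l.getLast hl = (-1 : ℝ) ^ listVar l * l.head hl := by
  cases l with
  | nil => exact absurd rfl hl
  | cons a t => exact listVar_getLast a t h

lemma var_eq_of_pm {n : ℕ} (τ : Fin n → ℝ) (hpm : ∀ i, τ i = 1 ∨ τ i = -1) :
    var τ = listVar (List.ofFn τ) := by
  unfold var
  congr 1
  apply List.filter_eq_self.mpr
  intro x hx
  obtain ⟨i, rfl⟩ := List.mem_ofFn.1 hx
  simp only [decide_eq_true_eq]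
  rcases hpm i with h | h <;> rw [h] <;> norm_num

theorem stmt9 (n k : ℕ) (hn : 0 < n) (σ : Fin n → ℝ) (hσ : IsSignVec σ)
    (hv : varbar σ = k) :
    (∃ τ : Fin n → ℝ, (∀ i, τ i = 1 ∨ τ i = -1) ∧ (∀ i, σ i ≠ 0 → τ i = σ i) ∧ var τ = k) ∧
    (∀ τ : Fin n → ℝ, (∀ i, τ i = 1 ∨ τ i = -1) → (∀ i, σ i ≠ 0 → τ i = σ i) → var τ = k →
      τ ⟨n - 1, by omega⟩ = (-1 : ℝ) ^ k * τ ⟨0, hn⟩) := by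
  constructor
  · have hvar_le : ∀ w : Fin n → ℝ, var w ≤ n := by
      intro w
      calc var w ≤ ((List.ofFn w).filter (fun x => x ≠ 0)).length := listVar_le_length _
        _ ≤ (List.ofFn w).length := (List.filter_sublist).length_le
        _ = n := List.length_ofFn
    have hBdd : BddAbove {m | ∃ w : Fin n → ℝ, (∀ i, σ i ≠ 0 → w i = σ i) ∧ var w = m} :=
      ⟨n, fun m hm => by obtain ⟨w, -, hw⟩ := hm; exact hw ▸ hvar_le w⟩
    have hne : Set.Nonempty {m | ∃ w : Fin n → ℝ, (∀ i, σ i ≠ 0 → w i = σ i) ∧ var w = m} :=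
      ⟨var σ, σ, fun _ _ => rfl, rfl⟩
    have hk : k ∈ {m | ∃ w : Fin n → ℝ, (∀ i, σ i ≠ 0 → w i = σ i) ∧ var w = m} := by
      rw [← hv]; exact Nat.sSup_mem hne hBdd
    obtain ⟨w, hw1, hw2⟩ := hk
    set τ : Fin n → ℝ := fun i => sgn (w i) with hτdef
    have hpm : ∀ i, τ i = 1 ∨ τ i = -1 := fun i => sgn_pm _
    have hagree : ∀ i, σ i ≠ 0 → τ i = σ i := by
      intro i hi
      rcases hσ i with h | h | h
      · exact absurd h hi
      · show sgn (w i) = σ i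
        rw [hw1 i hi, h]; norm_num [sgn]
      · show sgn (w i) = σ i
        rw [hw1 i hi, h]; norm_num [sgn]
    have hle : var τ ≤ k := by
      rw [← hv]
      exact le_csSup hBdd ⟨τ, hagree, rfl⟩
    have hge : k ≤ var τ := by
      rw [← hw2]
      have hfz : ∀ x ∈ (List.ofFn w).filter (fun x => x ≠ 0), x ≠ 0 := by
        intro x hx
        simpa using List.of_mem_filter hx
      calc var w = listVar (((List.ofFn w).filter (fun x => x ≠ 0)).map sgn) :=
            (listVar_map_sgn _ hfz).symm
        _ ≤ listVar ((List.ofFn w).map sgn) :=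
            listVar_sublist (List.Sublist.map sgn (List.filter_sublist))
              (by intro x hx
                  obtain ⟨y, -, rfl⟩ := List.mem_map.1 hx
                  exact sgn_ne y)
        _ = listVar (List.ofFn τ) := by rw [List.map_ofFn]; rfl
        _ = var τ := (var_eq_of_pm τ hpm).symm
    exact ⟨τ, hpm, hagree, le_antisymm hle hge⟩
  · intro τ hpm _ hvk
    have hne : List.ofFn τ ≠ [] := by
      simp only [ne_eq, List.ofFn_eq_nil_iff]
      omega
    have hall : ∀ x ∈ List.ofFn τ, x = 1 ∨ x = -1 := by
      intro x hx
      obtain ⟨i, rfl⟩ := List.mem_ofFn.1 hx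
      exact hpm i
    have hvar : listVar (List.ofFn τ) = k := by rw [← hvk, var_eq_of_pm τ hpm]
    have h1 := listVar_getLast' (List.ofFn τ) hne hall
    rw [List.getLast_eq_getElem, List.head_eq_getElem, List.getElem_ofFn, List.getElem_ofFn,
      hvar] at h1
    convert h1 using 3 <;> simp
end

section
/- For all integers n > k ≥ 0, the identity sum_{i=0}^{k} C(n-k-1+i, i) C(n, k-i) q^i = sum_{j=0}^{k} C(n-k-1+j, j) (1+q)^j holds in the polynomial ring Z[q]. -/
open scoped BigOperators

/-!
Expanding `(1 + q) ^ j` binomially and exchanging the two sums, the coefficient of `q ^ i` on the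
right is `∑_{i ≤ j ≤ k} C(a + j, j) C(j, i)` with `a = n - k - 1`. Each term factors as
`C(a + i, i) C(a + j, a + i)`, and the hockey-stick identity sums the second factor to
`C(a + k + 1, a + i + 1) = C(n, k - i)`.
-/

open Finset

namespace Nat

theorem add_choose_mul_choose (a i j : ℕ) :
    (a + j).choose j * j.choose i = (a + i).choose i * (a + j).choose (a + i) := by
  have h := choose_mul (n := a + j) (k := a + i) (s := a) (le_add_right a i)
  rw [Nat.add_sub_cancel_left, Nat.add_sub_cancel_left, choose_symm_add, choose_symm_add] at h
  rw [← h, mul_comm]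

theorem sum_Ico_add_choose (a i k : ℕ) :
    ∑ j ∈ Ico i (k + 1), (a + j).choose (a + i) = (a + k + 1).choose (a + i + 1) := by
  have h := sum_Ico_add' (fun m => m.choose (a + i)) i (k + 1) a
  simp only [add_comm _ a] at h
  rw [h, ← add_assoc, Ico_add_one_right_eq_Icc, sum_Icc_choose]

theorem sum_Ico_add_choose_mul_choose {a i k : ℕ} (hik : i ≤ k) :
    ∑ j ∈ Ico i (k + 1), (a + j).choose j * j.choose i =
      (a + i).choose i * (a + k + 1).choose (k - i) := by
  rw [sum_congr rfl fun j _ => add_choose_mul_choose a i j, ← mul_sum, sum_Ico_add_choose,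
    choose_symm_of_eq_add (by omega : a + k + 1 = a + i + 1 + (k - i))]

end Nat

theorem sum_range_add_choose_mul_one_add_pow {R : Type*} [CommSemiring R] (a k : ℕ) (x : R) :
    ∑ j ∈ range (k + 1), ((a + j).choose j : R) * (1 + x) ^ j =
      ∑ i ∈ range (k + 1), (((a + i).choose i * (a + k + 1).choose (k - i) : ℕ) : R) * x ^ i :=
  calc ∑ j ∈ range (k + 1), ((a + j).choose j : R) * (1 + x) ^ j
      = ∑ j ∈ Ico 0 (k + 1), ∑ i ∈ Ico 0 (j + 1),
          (((a + j).choose j * j.choose i : ℕ) : R) * x ^ i := by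
        rw [range_eq_Ico]
        refine sum_congr rfl fun j _ => ?_
        rw [add_comm 1 x, add_pow, ← range_eq_Ico, mul_sum]
        refine sum_congr rfl fun i _ => ?_
        push_cast
        ring
    _ = ∑ i ∈ Ico 0 (k + 1), ∑ j ∈ Ico i (k + 1),
          (((a + j).choose j * j.choose i : ℕ) : R) * x ^ i := (sum_Ico_Ico_comm _ _ _).symm
    _ = _ := by
        rw [range_eq_Ico]
        refine sum_congr rfl fun i hi => ?_
        rw [← sum_mul, ← Nat.cast_sum,
          Nat.sum_Ico_add_choose_mul_choose (Nat.le_of_lt_succ (mem_Ico.mp hi).2)]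

open Polynomial in
theorem stmt13 (n k : ℕ) (h : k < n) :
    (∑ i ∈ Finset.range (k + 1),
        (C (((n - k - 1 + i).choose i * n.choose (k - i) : ℕ) : ℤ)) * X ^ i) =
    ∑ j ∈ Finset.range (k + 1),
        (C (((n - k - 1 + j).choose j : ℕ) : ℤ)) * (1 + X) ^ j := by
  obtain ⟨a, rfl⟩ : ∃ a, n = a + k + 1 := ⟨n - k - 1, by omega⟩
  simp only [eq_intCast, Int.cast_natCast, show a + k + 1 - k - 1 = a by omega]
  exact (sum_range_add_choose_mul_one_add_pow a k X).symm
end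

section
/- Let M be a matroid on ground set E with connected components F_1, ..., F_l, and let M' be a matroid of the same rank on E all of whose bases are bases of M (M' ≤ M in the weak order). Then each F_j is a union of connected components of M', and the restriction M'|_{F_j} satisfies M'|_{F_j} ≤ M|_{F_j}. -/
/-!
Every basis exchange of `M'` is a basis exchange of `M`, so each component of `M'` lies inside a
component of `M`. For the restrictions, it suffices that `B ∩ F` is a basis of `F` in `M` for every
base `B` of `M`: an element `x ∈ F \ B` independent of `B ∩ F` could be exchanged into `B` against
some `y ∈ B \ F`, which would put `y` in the component `F` of `x`.
-/

/-- `i` and `j` are joined by a single basis exchange in the matroid `N`: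
there are bases `B, B'` of `N` with `B' = (B \ {i}) ∪ {j}`. -/
def MatroidStep {α : Type*} (N : Matroid α) (i j : α) : Prop :=
  ∃ B B' : Set α, N.IsBase B ∧ N.IsBase B' ∧ i ∈ B ∧ j ∈ B' ∧ B' = insert j (B \ {i})

/-- `i` and `j` lie in the same connected component of `N`. -/
def SameComp {α : Type*} (N : Matroid α) (i j : α) : Prop :=
  Relation.EqvGen (MatroidStep N) i j

/-- `F` is a connected component of the matroid `N`. -/
def IsComponent {α : Type*} (N : Matroid α) (F : Set α) : Prop :=
  ∃ i ∈ N.E, F = {j | j ∈ N.E ∧ SameComp N i j}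

open Set

section

variable {α : Type*} {M M' : Matroid α}

lemma MatroidStep.mono (hle : ∀ B, M'.IsBase B → M.IsBase B) {i j : α}
    (h : MatroidStep M' i j) : MatroidStep M i j :=
  let ⟨B, B', hB, hB', hi, hj, hB'eq⟩ := h
  ⟨B, B', hle B hB, hle B' hB', hi, hj, hB'eq⟩

lemma SameComp.mono (hle : ∀ B, M'.IsBase B → M.IsBase B) {i j : α}
    (h : SameComp M' i j) : SameComp M i j :=
  Relation.EqvGen.mono (fun _ _ ↦ MatroidStep.mono hle) _ _ h

lemma Matroid.IsBase.exists_matroidStep_of_insert_indep {B I : Set α} {x : α}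
    (hB : M.IsBase B) (hxB : x ∉ B) (hIB : I ⊆ B) (hI : M.Indep (insert x I)) :
    ∃ y ∈ B \ I, MatroidStep M y x := by
  obtain ⟨B', hB', hIB', hB'sub⟩ := hI.exists_isBase_subset_union_isBase hB
  have hBB' : ¬ B ⊆ B' := fun h ↦
    hxB ((hB.eq_of_subset_indep hB'.indep h) ▸ hIB' (mem_insert x I))
  obtain ⟨y, hyB, hyB'⟩ := not_subset.1 hBB'
  obtain ⟨z, ⟨hzB', hzB⟩, hexch⟩ := hB.exchange hB' ⟨hyB, hyB'⟩
  have hzx : z = x := by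
    rcases hB'sub hzB' with (hzx | hzI) | hzB''
    · exact hzx
    · exact absurd (hIB hzI) hzB
    · exact absurd hzB'' hzB
  subst hzx
  exact ⟨y, ⟨hyB, fun hyI ↦ hyB' (hIB' (mem_insert_of_mem z hyI))⟩,
    B, _, hB, hexch, hyB, mem_insert z _, rfl⟩

namespace IsComponent

variable {F : Set α}

lemma subset_ground (hF : IsComponent M F) : F ⊆ M.E := by
  obtain ⟨i, -, rfl⟩ := hF
  exact fun _ hj ↦ hj.1

lemma sameComp_of_mem (hF : IsComponent M F) {x y : α} (hx : x ∈ F) (hy : y ∈ F) :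
    SameComp M x y := by
  obtain ⟨i, -, rfl⟩ := hF
  exact .trans _ _ _ (.symm _ _ hx.2) hy.2

lemma mem_of_sameComp (hF : IsComponent M F) {x y : α} (hx : x ∈ F) (hy : y ∈ M.E)
    (hxy : SameComp M x y) : y ∈ F := by
  obtain ⟨i, -, rfl⟩ := hF
  exact ⟨hy, .trans _ _ _ hx.2 hxy⟩

lemma isBasis_inter_of_isBase (hF : IsComponent M F) {B : Set α} (hB : M.IsBase B) :
    M.IsBasis (B ∩ F) F := by
  refine (hB.indep.subset inter_subset_left).isBasis_of_forall_insert inter_subset_right ?_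
  rintro x ⟨hxF, hxBF⟩
  rw [← Matroid.not_indep_iff (insert_subset (hF.subset_ground hxF) (inter_subset_right.trans
    hF.subset_ground))]
  intro hind
  have hxB : x ∉ B := fun hxB ↦ hxBF ⟨hxB, hxF⟩
  obtain ⟨y, ⟨hyB, hyBF⟩, hyx⟩ :=
    hB.exists_matroidStep_of_insert_indep hxB inter_subset_left hind
  have hyF : y ∈ F :=
    hF.mem_of_sameComp hxF (hB.subset_ground hyB) (.symm _ _ (.rel _ _ hyx))
  exact hyBF ⟨hyB, hyF⟩

end IsComponent

end

theorem stmt17 {α : Type*} (M M' : Matroid α) (hE : M'.E = M.E)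
    (hle : ∀ B, M'.IsBase B → M.IsBase B)
    (F : Set α) (hF : IsComponent M F) :
    (∀ F', IsComponent M' F' → (F' ∩ F).Nonempty → F' ⊆ F) ∧
    (∀ B, (M'.restrict F).IsBase B → (M.restrict F).IsBase B) := by
  have hFE : F ⊆ M.E := hF.subset_ground
  constructor
  · rintro F' hF' ⟨k, hkF', hkF⟩ x hxF'
    refine hF.mem_of_sameComp hkF (hE ▸ hF'.subset_ground hxF') ?_
    exact (hF'.sameComp_of_mem hkF' hxF').mono hle
  · intro B hB
    rw [Matroid.isBase_restrict_iff (hE ▸ hFE)] at hB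
    rw [Matroid.isBase_restrict_iff hFE]
    obtain ⟨B₀, hB₀, rfl⟩ := hB.exists_isBase
    exact hF.isBasis_inter_of_isBase (hle B₀ hB₀)
end
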